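/- arXiv:1408.2283 — 2 statements merged into one kernel-verified Lean document; each statement's English description precedes it below -/
import Mathlib

section
/- Let N ≥ 2 and let u₁, …, u_N be real numbers with 0 < uᵢ < N and ∑ᵢ uᵢ = p·N, where p is an integer with 1 ≤ p ≤ N/2. Set bᵢ = uᵢ − p. Then log(2 sin(pπ/N)) − (1/N) ∑ᵢ log(2 sin(π uᵢ/N)) ≥ (1/12) · (1/N) ∑ᵢ min(bᵢ²/p², 1). -/
open Real Finset

/-! With `F x = log (2 sin x)`, `xᵢ = π uᵢ / N` and `a = p π / N`, the `xᵢ` average to `a`, so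
summing the tangent-line gaps `F a + F' a (xᵢ - a) - F xᵢ` gives `N` times the left-hand side.
Since `F'' = -1 / sin² ≤ -1 / x² = log''`, the function `log - F` is convex on `(0, π)`, so each
gap of `F` dominates the corresponding gap of `log`, namely `r - 1 - log r` with `r = uᵢ / p`.
Finally `r - 1 - log r ≥ (√r - 1)² ≥ min ((r - 1)², 1) / 6` (use `log √r ≤ √r - 1`). -/

theorem ConvexOn.add_mul_sub_le_of_hasDerivAt {S : Set ℝ} {f : ℝ → ℝ} {f' x y : ℝ}
    (hf : ConvexOn ℝ S f) (hx : x ∈ S) (hy : y ∈ S) (hf' : HasDerivAt f f' x) :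
    f x + f' * (y - x) ≤ f y := by
  rcases lt_trichotomy x y with hxy | rfl | hyx
  · have := hf.le_slope_of_hasDerivAt hx hy hxy hf'
    rw [slope_def_field, le_div_iff₀ (sub_pos.2 hxy)] at this
    linarith
  · simp
  · have := hf.slope_le_of_hasDerivAt hy hx hyx hf'
    rw [slope_def_field, div_le_iff₀ (sub_pos.2 hyx)] at this
    linarith

theorem hasDerivAt_log_two_mul_sin {x : ℝ} (hx : sin x ≠ 0) :
    HasDerivAt (fun t => log (2 * sin t)) (cos x / sin x) x :=
  (((hasDerivAt_sin x).const_mul 2).log (mul_ne_zero two_ne_zero hx)).congr_deriv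
    (mul_div_mul_left _ _ two_ne_zero)

theorem hasDerivAt_cos_div_sin {x : ℝ} (hx : sin x ≠ 0) :
    HasDerivAt (fun t => cos t / sin t) (-(1 / sin x ^ 2)) x :=
  ((hasDerivAt_cos x).div (hasDerivAt_sin x) hx).congr_deriv <| by
    field_simp
    linear_combination -sin_sq_add_cos_sq x

theorem convexOn_log_sub_log_two_mul_sin :
    ConvexOn ℝ (Set.Ioo 0 π) (fun t => log t - log (2 * sin t)) := by
  have hsin (x : ℝ) (hx : x ∈ Set.Ioo 0 π) : 0 < sin x := sin_pos_of_pos_of_lt_pi hx.1 hx.2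
  have hderiv (x : ℝ) (hx : x ∈ Set.Ioo 0 π) :
      HasDerivAt (fun t => log t - log (2 * sin t)) (x⁻¹ - cos x / sin x) x :=
    (hasDerivAt_log hx.1.ne').sub (hasDerivAt_log_two_mul_sin (hsin x hx).ne')
  refine convexOn_of_hasDerivWithinAt2_nonneg (convex_Ioo 0 π)
    (f' := fun t => t⁻¹ - cos t / sin t) (f'' := fun t => 1 / sin t ^ 2 - 1 / t ^ 2)
    (fun x hx => (hderiv x hx).continuousAt.continuousWithinAt) ?_ ?_ ?_ <;>
    rw [interior_Ioo] <;> intro x hx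
  · exact (hderiv x hx).hasDerivWithinAt
  · exact ((hasDerivAt_inv hx.1.ne').sub
      (hasDerivAt_cos_div_sin (hsin x hx).ne')).hasDerivWithinAt.congr_deriv (by ring)
  · have : 1 / x ^ 2 ≤ 1 / sin x ^ 2 := one_div_le_one_div_of_le (pow_pos (hsin x hx) 2)
      (pow_le_pow_left₀ (hsin x hx).le (sin_le hx.1.le) 2)
    exact sub_nonneg.2 this

theorem sub_one_sub_log_div_le_log_two_mul_sin_sub {a x : ℝ} (ha : a ∈ Set.Ioo 0 π)
    (hx : x ∈ Set.Ioo 0 π) :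
    x / a - 1 - log (x / a) ≤
      log (2 * sin a) + cos a / sin a * (x - a) - log (2 * sin x) := by
  have := convexOn_log_sub_log_two_mul_sin.add_mul_sub_le_of_hasDerivAt ha hx
    ((hasDerivAt_log ha.1.ne').sub
      (hasDerivAt_log_two_mul_sin (sin_pos_of_pos_of_lt_pi ha.1 ha.2).ne'))
  have hdiv : a⁻¹ * (x - a) = x / a - 1 := by field_simp [ha.1.ne']
  rw [log_div hx.1.ne' ha.1.ne']
  linarith

theorem sq_sqrt_sub_one_le_sub_one_sub_log {r : ℝ} (hr : 0 < r) :
    (√r - 1) ^ 2 ≤ r - 1 - log r := by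
  have hq : 0 < √r := sqrt_pos.2 hr
  have hlog : log r = 2 * log √r := by
    conv_lhs => rw [← sq_sqrt hr.le]
    rw [log_pow, Nat.cast_ofNat]
  nlinarith [log_le_sub_one_of_pos hq, sq_sqrt hr.le]

theorem min_sq_div_six_le_sub_one_sub_log {r : ℝ} (hr : 0 < r) :
    min ((r - 1) ^ 2) 1 / 6 ≤ r - 1 - log r := by
  have key := sq_sqrt_sub_one_le_sub_one_sub_log hr
  have hqr := sq_sqrt hr.le
  -- the constant `6` comes from `(√2 + 1) ^ 2 < 6` and `(√2 - 1) ^ 2 > 1 / 6`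
  rcases le_total ((r - 1) ^ 2) 1 with h | h
  · rw [min_eq_left h]
    have h6 : (√r + 1) ^ 2 ≤ 6 := by nlinarith [sq_nonneg (√r - 1)]
    have hse : (r - 1) ^ 2 = (√r - 1) ^ 2 * (√r + 1) ^ 2 := by
      calc (r - 1) ^ 2 = (√r ^ 2 - 1) ^ 2 := by rw [hqr]
        _ = _ := by ring
    nlinarith [mul_le_mul_of_nonneg_left h6 (sq_nonneg (√r - 1))]
  · rw [min_eq_right h]
    have hrr : 2 ≤ r := by nlinarith
    nlinarith [sq_nonneg (√r * √r - 2)]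

theorem Finset.sum_le_card_mul_sub_sum_of_le_tangent_gap {ι : Type*} (s : Finset ι)
    {φ : ℝ → ℝ} {a c : ℝ} {x d : ι → ℝ} (hx : ∑ i ∈ s, x i = #s * a)
    (hd : ∀ i ∈ s, d i ≤ φ a + c * (x i - a) - φ (x i)) :
    ∑ i ∈ s, d i ≤ #s * φ a - ∑ i ∈ s, φ (x i) := by
  have htangent : ∑ i ∈ s, c * (x i - a) = 0 := by
    rw [← mul_sum, sum_sub_distrib, hx, sum_const, nsmul_eq_mul, sub_self, mul_zero]
  calc ∑ i ∈ s, d i ≤ ∑ i ∈ s, (φ a + c * (x i - a) - φ (x i)) := sum_le_sum hd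
    _ = #s * φ a - ∑ i ∈ s, φ (x i) := by
      rw [sum_sub_distrib, sum_add_distrib, htangent, sum_const, nsmul_eq_mul, add_zero]

theorem quantitative_jensen_log_sin_general (N : ℕ) (u : Fin N → ℝ)
    (hu : ∀ i, 0 < u i ∧ u i < N) (p : ℤ) (hp1 : 1 ≤ p) (hp2 : (p : ℝ) ≤ N / 2)
    (hsum : ∑ i, u i = (p : ℝ) * N) :
    Real.log (2 * Real.sin ((p : ℝ) * Real.pi / N)) -
        (1 / (N : ℝ)) * ∑ i, Real.log (2 * Real.sin (Real.pi * u i / N)) ≥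
      (1 / 12) * ((1 / (N : ℝ)) *
        ∑ i, min ((u i - (p : ℝ)) ^ 2 / (p : ℝ) ^ 2) 1) := by
  have hp : (0 : ℝ) < p := by exact_mod_cast hp1
  have hN : (0 : ℝ) < N := by linarith
  set a : ℝ := p * π / N
  have ha : a ∈ Set.Ioo 0 π := ⟨div_pos (mul_pos hp pi_pos) hN, by rw [div_lt_iff₀ hN]; nlinarith [pi_pos]⟩
  have hx (i : Fin N) : π * u i / N ∈ Set.Ioo 0 π :=
    ⟨div_pos (mul_pos pi_pos (hu i).1) hN, by rw [div_lt_iff₀ hN]; nlinarith [pi_pos, (hu i).2]⟩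
  have hpointwise (i : Fin N) : min ((u i - p) ^ 2 / p ^ 2) 1 / 6 ≤
      log (2 * sin a) + cos a / sin a * (π * u i / N - a) - log (2 * sin (π * u i / N)) := by
    have hratio : π * u i / N / a = u i / p := by simp only [a]; field_simp
    have hsq : (u i / p - 1) ^ 2 = (u i - p) ^ 2 / p ^ 2 := by field_simp
    have := sub_one_sub_log_div_le_log_two_mul_sin_sub ha (hx i)
    rw [hratio] at this
    exact hsq ▸ (min_sq_div_six_le_sub_one_sub_log (div_pos (hu i).1 hp)).trans this
  have hangles : ∑ i, π * u i / N = #(univ : Finset (Fin N)) * a := by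
    rw [← sum_div, ← mul_sum, hsum, card_univ, Fintype.card_fin]
    simp only [a]
    field_simp
  have hgap := sum_le_card_mul_sub_sum_of_le_tangent_gap (φ := fun t => log (2 * sin t)) univ
    hangles (fun i _ => hpointwise i)
  rw [card_univ, Fintype.card_fin, ← sum_div] at hgap
  set S := ∑ i, min ((u i - (p : ℝ)) ^ 2 / (p : ℝ) ^ 2) 1
  have hS : 0 ≤ 1 / (N : ℝ) * S := by positivity
  calc 1 / 12 * (1 / (N : ℝ) * S) ≤ 1 / N * (S / 6) := by linarith
    _ ≤ 1 / N * (N * log (2 * sin a) - ∑ i, log (2 * sin (π * u i / N))) := by gcongr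
    _ = _ := by field_simp

theorem quantitative_jensen_log_sin (N : ℕ) (hN : 2 ≤ N) (u : Fin N → ℝ)
    (hu : ∀ i, 0 < u i ∧ u i < N) (p : ℤ) (hp1 : 1 ≤ p) (hp2 : (p : ℝ) ≤ N / 2)
    (hsum : ∑ i, u i = (p : ℝ) * N) :
    Real.log (2 * Real.sin ((p : ℝ) * Real.pi / N)) -
        (1 / (N : ℝ)) * ∑ i, Real.log (2 * Real.sin (Real.pi * u i / N)) ≥
      (1 / 12) * ((1 / (N : ℝ)) *
        ∑ i, min ((u i - (p : ℝ)) ^ 2 / (p : ℝ) ^ 2) 1) :=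
  quantitative_jensen_log_sin_general N u hu p hp1 hp2 hsum
end

section
/- Let N ≥ 2 and let a₁ < a₂ < ⋯ < a_N be points in [0, N). Then W(E_{a_i}) = −(π/N) ∑_{i≠j} log|2 sin(π(a_i − a_j)/N)| − π log(2π/N) ≥ −π log(2π), with equality if and only if the points are equally spaced, i.e., a_{i+1} − a_i = 1 for all i (indices mod N, with a_{N+1} = a₁ + N). -/
/-!
With `u_{p,i} = a_{i+p} - a_i`, the pair sum regroups as `∑_{p<N} ∑_i log |2 sin (π u_{p,i} / N)|`,
since the summand is even and `N`-periodic in `a_i - a_j`.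
For `0 < p < N` the `u_{p,i}` lie in `(0, N)` and average to `p`, so Jensen's inequality for the
strictly concave `θ ↦ log (2 sin θ)` on `(0, π)` bounds the inner sum by `N log (2 sin (π p / N))`,
with equality iff every `u_{p,i} = p`. These lattice values sum to `log N`, because
`∏_{p=1}^{N-1} |1 - ζ^p| = N` for a primitive `N`-th root of unity `ζ`.
-/

open Real Finset

namespace Function.Periodic

variable {M : Type*} {g : ℕ → M} {N : ℕ}

lemma sum_range_add [AddCancelCommMonoid M] (hg : Periodic g N) (i : ℕ) :
    ∑ p ∈ range N, g (i + p) = ∑ p ∈ range N, g p := by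
  induction i with
  | zero => simp
  | succ i ih =>
    have h := (sum_range_succ' (fun p => g (i + p)) N).symm.trans (sum_range_succ _ N)
    rw [add_zero, hg i, ih] at h
    simpa only [← ih, add_assoc, add_comm 1] using add_right_cancel h

lemma sum_Icc_one_eq_sum_range_add [AddCancelCommMonoid M] (hg : Periodic g N) (i : ℕ) :
    ∑ j ∈ Icc 1 N, g j = ∑ p ∈ range N, g (i + p) := by
  rw [hg.sum_range_add, ← Ico_add_one_right_eq_Icc, sum_Ico_eq_sum_range, Nat.add_sub_cancel,
    ← hg.sum_range_add 1]

lemma sum_Icc_one_add [AddCancelCommMonoid M] (hg : Periodic g N) (i : ℕ) :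
    ∑ j ∈ Icc 1 N, g (j + i) = ∑ j ∈ Icc 1 N, g j := by
  rw [(hg.add_const i).sum_Icc_one_eq_sum_range_add 1, hg.sum_Icc_one_eq_sum_range_add (1 + i)]
  simp only [add_right_comm 1 _ i]

lemma exists_mem_Icc_one_eq (hg : Periodic g N) (hN : 0 < N) (j : ℕ) :
    ∃ k ∈ Icc 1 N, g k = g j := by
  rcases Nat.eq_zero_or_pos (j % N) with h | h
  · exact ⟨N, mem_Icc.mpr ⟨hN, le_rfl⟩, by rw [← zero_add N, hg, ← h, hg.map_mod_nat]⟩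
  · exact ⟨j % N, mem_Icc.mpr ⟨h, (Nat.mod_lt j hN).le⟩, hg.map_mod_nat j⟩

end Function.Periodic

section Jensen

variable {ι E : Type*} [AddCommGroup E] [Module ℝ E] {s : Set E} {f : E → ℝ} {t : Finset ι}
  {x : ι → E} {m : E}

lemma sum_inv_card_smul_eq_of_sum_eq (ht : t.Nonempty) (hm : ∑ i ∈ t, x i = #t • m) :
    ∑ i ∈ t, (#t : ℝ)⁻¹ • x i = m := by
  rw [← smul_sum, hm, ← Nat.cast_smul_eq_nsmul ℝ, smul_smul,
    inv_mul_cancel₀ (by exact_mod_cast ht.card_ne_zero), one_smul]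

lemma sum_inv_card_eq_one (ht : t.Nonempty) : ∑ _i ∈ t, (#t : ℝ)⁻¹ = 1 := by
  rw [sum_const, nsmul_eq_mul, mul_inv_cancel₀ (by exact_mod_cast ht.card_ne_zero)]

lemma ConcaveOn.sum_le_card_mul_of_sum_eq (hf : ConcaveOn ℝ s f) (ht : t.Nonempty)
    (hx : ∀ i ∈ t, x i ∈ s) (hm : ∑ i ∈ t, x i = #t • m) :
    ∑ i ∈ t, f (x i) ≤ #t * f m := by
  have := hf.le_map_sum (fun _ _ => inv_nonneg.mpr (Nat.cast_nonneg _))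
    (sum_inv_card_eq_one ht) hx
  rw [sum_inv_card_smul_eq_of_sum_eq ht hm, ← smul_sum, smul_eq_mul,
    inv_mul_le_iff₀ (by exact_mod_cast ht.card_pos)] at this
  exact this

lemma StrictConcaveOn.sum_eq_card_mul_iff_of_sum_eq (hf : StrictConcaveOn ℝ s f)
    (ht : t.Nonempty) (hx : ∀ i ∈ t, x i ∈ s) (hm : ∑ i ∈ t, x i = #t • m) :
    ∑ i ∈ t, f (x i) = #t * f m ↔ ∀ i ∈ t, x i = m := by
  have := hf.map_sum_eq_iff (fun _ _ => inv_pos.mpr (by exact_mod_cast ht.card_pos))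
    (sum_inv_card_eq_one ht) hx
  rw [sum_inv_card_smul_eq_of_sum_eq ht hm, ← smul_sum, smul_eq_mul, eq_inv_mul_iff_mul_eq₀
    (by exact_mod_cast ht.card_ne_zero), eq_comm] at this
  exact this

end Jensen

noncomputable def logTwoSin (θ : ℝ) : ℝ := log |2 * sin θ|

@[simp] lemma logTwoSin_zero : logTwoSin 0 = 0 := by simp [logTwoSin]

lemma logTwoSin_neg (θ : ℝ) : logTwoSin (-θ) = logTwoSin θ := by
  simp [logTwoSin]

lemma periodic_logTwoSin : Function.Periodic logTwoSin π := fun θ => by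
  simp [logTwoSin, sin_add_pi]

lemma strictConcaveOn_logTwoSin : StrictConcaveOn ℝ (Set.Ioo 0 π) logTwoSin := by
  have hsin : StrictConcaveOn ℝ (Set.Ioo 0 π) sin :=
    strictConcaveOn_sin_Icc.subset Set.Ioo_subset_Icc_self (convex_Ioo 0 π)
  have hpos : sin '' Set.Ioo 0 π ⊆ Set.Ioi 0 := by
    rintro _ ⟨θ, hθ, rfl⟩
    exact sin_pos_of_pos_of_lt_pi hθ.1 hθ.2
  have hconv : Convex ℝ (sin '' Set.Ioo 0 π) :=
    (isPreconnected_Ioo.image sin continuousOn_sin).ordConnected.convex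
  refine (((strictConcaveOn_log_Ioi.concaveOn.subset hpos hconv).comp_strictConcaveOn hsin
    (strictMonoOn_log.mono hpos)).add_const (log 2)).congr fun θ hθ => ?_
  have := sin_pos_of_pos_of_lt_pi hθ.1 hθ.2
  simp only [logTwoSin, Pi.add_apply, Function.comp_apply]
  rw [abs_of_pos (by positivity), log_mul two_ne_zero this.ne', add_comm]

lemma Complex.norm_one_sub_exp_two_mul_I (θ : ℝ) :
    ‖1 - exp (2 * θ * I)‖ = |2 * Real.sin θ| := by
  have : 1 - exp (2 * θ * I) =
      ((1 - Real.cos (2 * θ) : ℝ) : ℂ) + ((-Real.sin (2 * θ) : ℝ) : ℂ) * I := by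
    rw [← ofReal_ofNat, ← ofReal_mul, exp_mul_I]; push_cast; ring
  rw [this, norm_add_mul_I, ← sqrt_sq_eq_abs, Real.cos_two_mul, Real.sin_two_mul]
  congr 1
  nlinarith [Real.sin_sq_add_cos_sq θ]

lemma sum_range_logTwoSin (N : ℕ) : ∑ p ∈ range N, logTwoSin (π * p / N) = log N := by
  rcases N with _ | n
  · simp
  set μ := Complex.exp (2 * π * Complex.I / (n + 1 : ℕ))
  have hμ : IsPrimitiveRoot μ (n + 1) := Complex.isPrimitiveRoot_exp (n + 1) n.succ_ne_zero
  have hterm (k : ℕ) : logTwoSin (π * (k + 1 : ℕ) / (n + 1 : ℕ)) = log ‖1 - μ ^ (k + 1)‖ := by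
    rw [logTwoSin, ← Complex.exp_nat_mul, ← Complex.norm_one_sub_exp_two_mul_I]
    congr 4
    push_cast
    ring
  have hne (k : ℕ) (hk : k ∈ range n) : ‖1 - μ ^ (k + 1)‖ ≠ 0 :=
    norm_ne_zero_iff.mpr <| sub_ne_zero.mpr
      (hμ.pow_ne_one_of_pos_of_lt k.succ_ne_zero (by simpa using hk)).symm
  rw [sum_range_succ']
  simp only [hterm, CharP.cast_eq_zero, mul_zero, zero_div, logTwoSin_zero, add_zero]
  rw [← log_prod hne, ← norm_prod, hμ.prod_one_sub_pow_eq_order]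
  norm_cast

section PeriodicConfiguration

variable {N : ℕ} {a : ℕ → ℝ}

lemma periodic_sub_natCast (hper : ∀ i, a (i + N) = a i + N) :
    Function.Periodic (fun i => a i - i) N := fun i => by
  simp only [hper, Nat.cast_add]; ring

lemma periodic_gap (hper : ∀ i, a (i + N) = a i + N) :
    Function.Periodic (fun i => a (i + 1) - a i) N := fun i => by
  simp only [add_right_comm i N 1, hper]; ring

lemma sum_Icc_sub_eq (hper : ∀ i, a (i + N) = a i + N) (p : ℕ) :
    ∑ i ∈ Icc 1 N, (a (i + p) - a i) = p * N := by
  have hsplit (i : ℕ) : a (i + p) - a i = (a (i + p) - ↑(i + p)) - (a i - i) + p := by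
    push_cast; ring
  rw [sum_congr rfl fun i _ => hsplit i, sum_add_distrib, sum_sub_distrib,
    (periodic_sub_natCast hper).sum_Icc_one_add p, sub_self, zero_add, sum_const, Nat.card_Icc,
    Nat.add_sub_cancel, nsmul_eq_mul, mul_comm]

lemma strictMono_of_forall_mem_Icc_lt_succ (hper : ∀ i, a (i + N) = a i + N) (hN : 0 < N)
    (h : ∀ i ∈ Icc 1 N, a i < a (i + 1)) : StrictMono a :=
  strictMono_nat_of_lt_succ fun j => by
    obtain ⟨k, hk, hkj⟩ := (periodic_gap hper).exists_mem_Icc_one_eq hN j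
    linarith [h k hk]

lemma sub_eq_of_forall_mem_Icc_gap_eq_one (hper : ∀ i, a (i + N) = a i + N) (hN : 0 < N)
    (h : ∀ i ∈ Icc 1 N, a (i + 1) - a i = 1) (i p : ℕ) : a (i + p) - a i = p := by
  induction p with
  | zero => simp
  | succ p ih =>
    obtain ⟨k, hk, hkj⟩ := (periodic_gap hper).exists_mem_Icc_one_eq hN (i + p)
    rw [← add_assoc]
    push_cast
    linarith [h k hk]

lemma sub_mem_Ioo (hper : ∀ i, a (i + N) = a i + N) (ha : StrictMono a) {p : ℕ} (hp0 : 0 < p)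
    (hpN : p < N) (i : ℕ) : a (i + p) - a i ∈ Set.Ioo 0 (N : ℝ) := by
  have := ha (show i + p < i + N by omega)
  rw [hper] at this
  exact ⟨sub_pos.mpr (ha (by omega)), by linarith⟩

end PeriodicConfiguration

section LogTwoSinSums

variable {N : ℕ} {a : ℕ → ℝ}

lemma sum_ite_log_eq_sum_range_sum_logTwoSin (hper : ∀ i, a (i + N) = a i + N) (hN : 0 < N) :
    (∑ i ∈ Icc 1 N, ∑ j ∈ Icc 1 N,
      if i ≠ j then log |2 * sin (π * (a i - a j) / N)| else 0) =
      ∑ p ∈ range N, ∑ i ∈ Icc 1 N, logTwoSin (π * (a (i + p) - a i) / N) := by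
  refine (sum_congr rfl fun i _ => ?_).trans sum_comm
  have hg : Function.Periodic (fun j => logTwoSin (π * (a j - a i) / N)) N := fun j => by
    have hN' : (N : ℝ) ≠ 0 := Nat.cast_ne_zero.mpr hN.ne'
    dsimp only
    rw [hper, ← periodic_logTwoSin (π * (a j - a i) / N)]
    congr 1
    field_simp
    ring
  calc _ = ∑ j ∈ Icc 1 N, logTwoSin (π * (a j - a i) / N) := sum_congr rfl fun j _ => by
        split_ifs with h
        · rw [← logTwoSin_neg, logTwoSin, ← neg_div, ← mul_neg, neg_sub]
        · simp [not_not.mp h] -- the diagonal term is `log 0 = 0`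
    _ = _ := hg.sum_Icc_one_eq_sum_range_add i

lemma sum_pi_mul_sub_div_eq (hper : ∀ i, a (i + N) = a i + N) (hN : 0 < N) (p : ℕ) :
    ∑ i ∈ Icc 1 N, π * (a (i + p) - a i) / N = #(Icc 1 N) • (π * p / N) := by
  rw [← sum_div, ← mul_sum, sum_Icc_sub_eq hper, Nat.card_Icc, Nat.add_sub_cancel, nsmul_eq_mul]
  field_simp

lemma pi_mul_sub_div_mem_Ioo (hper : ∀ i, a (i + N) = a i + N) (ha : StrictMono a) {p : ℕ}
    (hp0 : 0 < p) (hpN : p < N) (i : ℕ) : π * (a (i + p) - a i) / N ∈ Set.Ioo 0 π := by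
  obtain ⟨hpos, hlt⟩ := sub_mem_Ioo hper ha hp0 hpN i
  have hN : (0 : ℝ) < N := hpos.trans hlt
  refine ⟨by positivity, ?_⟩
  rw [div_lt_iff₀ hN]
  exact mul_lt_mul_of_pos_left hlt pi_pos

lemma sum_logTwoSin_sub_le (hper : ∀ i, a (i + N) = a i + N) (ha : StrictMono a) {p : ℕ}
    (hpN : p < N) :
    ∑ i ∈ Icc 1 N, logTwoSin (π * (a (i + p) - a i) / N) ≤ N * logTwoSin (π * p / N) := by
  rcases Nat.eq_zero_or_pos p with rfl | hp0
  · simp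
  have := strictConcaveOn_logTwoSin.concaveOn.sum_le_card_mul_of_sum_eq
    (nonempty_Icc.mpr (by omega)) (fun i _ => pi_mul_sub_div_mem_Ioo hper ha hp0 hpN i)
    (sum_pi_mul_sub_div_eq hper (by omega) p)
  rwa [Nat.card_Icc, Nat.add_sub_cancel] at this

lemma sum_logTwoSin_sub_eq_iff (hper : ∀ i, a (i + N) = a i + N) (ha : StrictMono a) {p : ℕ}
    (hp0 : 0 < p) (hpN : p < N) :
    ∑ i ∈ Icc 1 N, logTwoSin (π * (a (i + p) - a i) / N) = N * logTwoSin (π * p / N) ↔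
      ∀ i ∈ Icc 1 N, a (i + p) - a i = p := by
  have := strictConcaveOn_logTwoSin.sum_eq_card_mul_iff_of_sum_eq
    (nonempty_Icc.mpr (by omega)) (fun i _ => pi_mul_sub_div_mem_Ioo hper ha hp0 hpN i)
    (sum_pi_mul_sub_div_eq hper (by omega) p)
  rw [Nat.card_Icc, Nat.add_sub_cancel] at this
  rw [this]
  have hN : (N : ℝ) ≠ 0 := Nat.cast_ne_zero.mpr (by omega)
  refine forall₂_congr fun i _ => ?_
  rw [div_left_inj' hN, mul_right_inj' pi_ne_zero]

lemma sum_range_sum_logTwoSin_sub_le (hper : ∀ i, a (i + N) = a i + N)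
    (ha : StrictMono a) :
    ∑ p ∈ range N, ∑ i ∈ Icc 1 N, logTwoSin (π * (a (i + p) - a i) / N) ≤ N * log N := by
  rw [← sum_range_logTwoSin N, mul_sum]
  exact sum_le_sum fun p hp => sum_logTwoSin_sub_le hper ha (mem_range.mp hp)

lemma sum_range_sum_logTwoSin_sub_eq_iff (hper : ∀ i, a (i + N) = a i + N)
    (ha : StrictMono a) (hN : 1 < N) :
    ∑ p ∈ range N, ∑ i ∈ Icc 1 N, logTwoSin (π * (a (i + p) - a i) / N) = N * log N ↔
      ∀ i ∈ Icc 1 N, a (i + 1) - a i = 1 := by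
  rw [← sum_range_logTwoSin N, mul_sum,
    sum_eq_sum_iff_of_le fun p hp => sum_logTwoSin_sub_le hper ha (mem_range.mp hp)]
  constructor
  · intro h
    simpa using (sum_logTwoSin_sub_eq_iff hper ha one_pos hN).mp (h 1 (mem_range.mpr hN))
  · intro h p _
    have hsub := sub_eq_of_forall_mem_Icc_gap_eq_one hper (by omega) h
    simp only [hsub, sum_const, Nat.card_Icc, Nat.add_sub_cancel, nsmul_eq_mul]

end LogTwoSinSums

theorem W_ge_W_lattice_iff (N : ℕ) (hN : 2 ≤ N) (a : ℕ → ℝ)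
    (hper : ∀ i, a (i + N) = a i + N)
    (hmono : ∀ i j, 1 ≤ i → i < j → j ≤ N → a i < a j)
    (hrange : ∀ i, 1 ≤ i → i ≤ N → a i ∈ Set.Ico (0 : ℝ) N) :
    -(Real.pi / N) * (∑ i ∈ Finset.Icc 1 N, ∑ j ∈ Finset.Icc 1 N,
          if i ≠ j then Real.log |2 * Real.sin (Real.pi * (a i - a j) / N)| else 0) -
        Real.pi * Real.log (2 * Real.pi / N) ≥ -Real.pi * Real.log (2 * Real.pi) ∧
    (-(Real.pi / N) * (∑ i ∈ Finset.Icc 1 N, ∑ j ∈ Finset.Icc 1 N,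
          if i ≠ j then Real.log |2 * Real.sin (Real.pi * (a i - a j) / N)| else 0) -
        Real.pi * Real.log (2 * Real.pi / N) = -Real.pi * Real.log (2 * Real.pi) ↔
      ∀ i, 1 ≤ i → i ≤ N → a (i + 1) - a i = 1) := by
  have hN0 : 0 < N := by omega
  have ha : StrictMono a := strictMono_of_forall_mem_Icc_lt_succ hper hN0 fun i hi => by
    obtain ⟨hi1, hiN⟩ := mem_Icc.mp hi
    rcases hiN.lt_or_eq with hlt | rfl
    · exact hmono i (i + 1) hi1 (by omega) hlt
    · rw [add_comm, hper]
      linarith [(hrange 1 le_rfl hN0).1, (hrange i hi1 le_rfl).2]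
  rw [sum_ite_log_eq_sum_range_sum_logTwoSin hper hN0]
  set S := ∑ p ∈ range N, ∑ i ∈ Icc 1 N, logTwoSin (π * (a (i + p) - a i) / N)
  have hW : -(π / N) * S - π * log (2 * π / N) = -π * log (2 * π) + π / N * (N * log N - S) := by
    rw [log_div (by positivity) (by positivity)]
    field_simp
    ring
  have hle : S ≤ N * log N := sum_range_sum_logTwoSin_sub_le hper ha
  have hπN : 0 < π / N := by positivity
  rw [hW, ge_iff_le, le_add_iff_nonneg_right, add_eq_left, mul_eq_zero, or_iff_right hπN.ne',
    sub_eq_zero, eq_comm, sum_range_sum_logTwoSin_sub_eq_iff hper ha hN]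
  exact ⟨mul_nonneg hπN.le (sub_nonneg.mpr hle), by simp only [mem_Icc, and_imp]⟩
end
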